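/- Let l ∈ ℝ. Consider the quadratic vector field Z(x,y) = (−y + l x², x(1−y)) and the function H(x,y) = (1−y)^{2l} · (−(2l+1) l x² + 2 l y + 1), defined with real powers on the open half-plane {y < 1}. Then H is a first integral of Z on {y < 1}: for every p with p₂ < 1, H is differentiable at p and ∂H/∂x(p)·Z₁(p) + ∂H/∂y(p)·Z₂(p) = 0. Moreover, H(0,y) = (1−y)^{2l}(2ly + 1) for all y < 1. -/

import Mathlib

/-- The quadratic vector field `Z(x,y) = (−y + l x², x(1−y))`. -/
def Zq (l : ℝ) (p : ℝ × ℝ) : ℝ × ℝ :=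
  (-p.2 + l * p.1 ^ 2, p.1 * (1 - p.2))

/-- The function `H(x,y) = (1−y)^{2l} (−(2l+1) l x² + 2ly + 1)`, with real powers. -/
noncomputable def Hd (l : ℝ) (p : ℝ × ℝ) : ℝ :=
  (1 - p.2) ^ (2 * l) * (-(2 * l + 1) * l * p.1 ^ 2 + 2 * l * p.2 + 1)

/-!
`H = f^{2l} g` with `f = 1 - y` and `g = -(2l+1) l x² + 2ly + 1` is a product of powers of
Darboux polynomials of `Z`: `Z f = -x f` and `Z g = 2lx g`. The cofactor of `f^a g` is
`a` times that of `f` plus that of `g`, here `2l(-x) + 2lx = 0`, so `Z H = 0` wherever `f > 0`.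
-/

section Darboux

variable {E : Type*} [NormedAddCommGroup E] [NormedSpace ℝ E] {f g : E → ℝ} {p v : E}

theorem DifferentiableAt.rpow_const_mul (a : ℝ) (hf : DifferentiableAt ℝ f p)
    (hg : DifferentiableAt ℝ g p) (hpos : 0 < f p) :
    DifferentiableAt ℝ (fun q => f q ^ a * g q) p :=
  (hf.rpow_const (Or.inl hpos.ne')).mul hg

theorem fderiv_rpow_const_mul_apply_of_cofactors (a : ℝ) {kf kg : ℝ}
    (hf : DifferentiableAt ℝ f p) (hg : DifferentiableAt ℝ g p) (hpos : 0 < f p)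
    (hfv : fderiv ℝ f p v = kf * f p) (hgv : fderiv ℝ g p v = kg * g p) :
    fderiv ℝ (fun q => f q ^ a * g q) p v = (a * kf + kg) * (f p ^ a * g p) := by
  have hfa := hf.hasFDerivAt.rpow_const (p := a) (Or.inl hpos.ne')
  rw [(hfa.fun_mul hg.hasFDerivAt).fderiv]
  have hpow : f p ^ (a - 1) * f p = f p ^ a := by
    rw [← Real.rpow_add_one hpos.ne', sub_add_cancel]
  simp only [add_apply, smul_apply, smul_eq_mul, hfv, hgv]
  rw [← hpow]
  ring

end Darboux

theorem fderiv_one_sub_snd_apply_Zq (l : ℝ) (p : ℝ × ℝ) :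
    fderiv ℝ (fun q : ℝ × ℝ => 1 - q.2) p (Zq l p) = -p.1 * (1 - p.2) := by
  rw [fderiv_const_sub, fderiv_snd]
  simp [Zq]

theorem fderiv_quadratic_apply_Zq (l : ℝ) (p : ℝ × ℝ) :
    fderiv ℝ (fun q : ℝ × ℝ => -(2 * l + 1) * l * q.1 ^ 2 + 2 * l * q.2 + 1) p (Zq l p) =
      2 * l * p.1 * (-(2 * l + 1) * l * p.1 ^ 2 + 2 * l * p.2 + 1) := by
  have h : HasFDerivAt (fun q : ℝ × ℝ => -(2 * l + 1) * l * q.1 ^ 2 + 2 * l * q.2 + 1) _ p :=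
    (((HasFDerivAt.pow hasFDerivAt_fst 2).const_mul (-(2 * l + 1) * l)).fun_add
      (HasFDerivAt.const_mul (hasFDerivAt_snd (𝕜 := ℝ)) (2 * l))).add_const 1
  rw [h.fderiv]
  simp only [Zq, add_apply, smul_apply, smul_eq_mul, nsmul_eq_mul, Nat.cast_ofNat,
    ContinuousLinearMap.coe_fst', ContinuousLinearMap.coe_snd']
  ring

/-- `H(x,y) = (1−y)^{2l} (−(2l+1) l x² + 2ly + 1)` is a first integral of
`Z(x,y) = (−y + l x², x(1−y))` on the half-plane `{y < 1}`, and
`H(0,y) = (1−y)^{2l} (2ly + 1)` there. -/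
theorem darboux_first_integral_V3 (l : ℝ) :
    (∀ p : ℝ × ℝ, p.2 < 1 →
      DifferentiableAt ℝ (Hd l) p ∧ fderiv ℝ (Hd l) p (Zq l p) = 0) ∧
    (∀ y : ℝ, y < 1 → Hd l (0, y) = (1 - y) ^ (2 * l) * (2 * l * y + 1)) := by
  refine ⟨fun p hp => ?_, fun y _ => by simp [Hd]⟩
  have hf : DifferentiableAt ℝ (fun q : ℝ × ℝ => 1 - q.2) p := by fun_prop
  have hg : DifferentiableAt ℝ
      (fun q : ℝ × ℝ => -(2 * l + 1) * l * q.1 ^ 2 + 2 * l * q.2 + 1) p := by fun_prop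
  have hpos : 0 < 1 - p.2 := sub_pos.mpr hp
  refine ⟨hf.rpow_const_mul (2 * l) hg hpos, ?_⟩
  unfold Hd
  rw [fderiv_rpow_const_mul_apply_of_cofactors (2 * l) hf hg hpos
    (fderiv_one_sub_snd_apply_Zq l p) (fderiv_quadratic_apply_Zq l p)]
  ring
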